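/- Let K and H be symmetric positive definite n×n real matrices, y ∈ ℝⁿ, and λ > 0. Define g(γ) = (y − Kγ)'H(y − Kγ) + λγ'Kγ for γ ∈ ℝⁿ. Then γ̂ = (K + λH⁻¹)⁻¹y is the unique minimizer of g: for every γ ∈ ℝⁿ, g(γ̂) ≤ g(γ), with equality if and only if γ = γ̂. That is, the Franklin estimate also minimizes the H-weighted residual with K-weighted penalty. -/

import Mathlib

/-!
With `M = K H K + λK`, the objective expands as `g(c) = y'Hy − 2 c'KHy + c'Mc`. Since
`M = KH(K + λH⁻¹)`, the Franklin estimate solves the normal equations `M γ̂ = KHy`, so completing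
the square gives `g(c) = g(γ̂) + (c − γ̂)'M(c − γ̂)`, and `M` is positive definite because `K` is
and `λ > 0`.
-/

open Matrix

namespace Matrix

section CommRing

variable {ι R : Type*} [Fintype ι] [CommRing R]

theorem IsSymm.dotProduct_mulVec_comm {B : Matrix ι ι R} (hB : B.IsSymm) (v w : ι → R) :
    v ⬝ᵥ (B *ᵥ w) = w ⬝ᵥ (B *ᵥ v) := by
  rw [dotProduct_mulVec, ← mulVec_transpose, hB.eq, dotProduct_comm]

theorem IsSymm.dotProduct_sub_mulVec_sub {M : Matrix ι ι R} (hM : M.IsSymm) (c x : ι → R) :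
    (c - x) ⬝ᵥ (M *ᵥ (c - x)) = c ⬝ᵥ (M *ᵥ c) - 2 * (c ⬝ᵥ (M *ᵥ x)) + x ⬝ᵥ (M *ᵥ x) := by
  simp only [mulVec_sub, dotProduct_sub, sub_dotProduct]
  rw [hM.dotProduct_mulVec_comm x c]
  ring

theorem weighted_residual_add_penalty_eq {K H : Matrix ι ι R} (hK : K.IsSymm) (hH : H.IsSymm)
    (y c : ι → R) (lam : R) :
    (y - K *ᵥ c) ⬝ᵥ (H *ᵥ (y - K *ᵥ c)) + lam * (c ⬝ᵥ (K *ᵥ c)) =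
      y ⬝ᵥ (H *ᵥ y) - 2 * (c ⬝ᵥ ((K * H) *ᵥ y)) + c ⬝ᵥ ((K * H * K + lam • K) *ᵥ c) := by
  have moveK (v : ι → R) : (K *ᵥ c) ⬝ᵥ v = c ⬝ᵥ (K *ᵥ v) := by
    rw [dotProduct_comm, hK.dotProduct_mulVec_comm]
  simp only [mulVec_sub, dotProduct_sub, sub_dotProduct, add_mulVec, dotProduct_add,
    smul_mulVec, dotProduct_smul, smul_eq_mul, ← mulVec_mulVec, moveK,
    hH.dotProduct_mulVec_comm y (K *ᵥ c)]
  ring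

variable [DecidableEq ι]

theorem mul_mul_add_smul_mulVec_inv_mulVec {K H : Matrix ι ι R} (hH : IsUnit H.det) {lam : R}
    (hA : IsUnit (K + lam • H⁻¹).det) (y : ι → R) :
    (K * H * K + lam • K) *ᵥ ((K + lam • H⁻¹)⁻¹ *ᵥ y) = (K * H) *ᵥ y := by
  have hfactor : K * H * K + lam • K = K * H * (K + lam • H⁻¹) := by
    rw [mul_add, Matrix.mul_smul, mul_assoc K H H⁻¹, mul_nonsing_inv _ hH, mul_one]
  rw [hfactor, mulVec_mulVec, mul_assoc, mul_nonsing_inv _ hA, mul_one]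

end CommRing

variable {ι : Type*} [Fintype ι]

theorem PosDef.mul_mul_add_smul {K H : Matrix ι ι ℝ} (hK : K.PosDef) (hH : H.PosSemidef)
    {lam : ℝ} (hlam : 0 < lam) : (K * H * K + lam • K).PosDef := by
  have hKHK : (K * H * K).PosSemidef := by
    have := hH.conjTranspose_mul_mul_same K
    rwa [hK.isHermitian.eq] at this
  exact PosDef.posSemidef_add hKHK (hK.smul hlam)

theorem PosDef.unique_min_of_eq_quadratic {M : Matrix ι ι ℝ} (hM : M.PosDef) {f : (ι → ℝ) → ℝ}
    {a : ℝ} {x : ι → ℝ} (hf : ∀ c, f c = a - 2 * (c ⬝ᵥ (M *ᵥ x)) + c ⬝ᵥ (M *ᵥ c)) (c : ι → ℝ) :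
    f x ≤ f c ∧ (f x = f c ↔ c = x) := by
  have hsymm : M.IsSymm := hM.isHermitian
  have hsquare : f c = f x + (c - x) ⬝ᵥ (M *ᵥ (c - x)) := by
    rw [hf, hf, hsymm.dotProduct_sub_mulVec_sub]
    ring
  rcases eq_or_ne c x with rfl | hne
  · simp
  have hpos : 0 < (c - x) ⬝ᵥ (M *ᵥ (c - x)) := by
    simpa using hM.dotProduct_mulVec_pos (sub_ne_zero.2 hne)
  exact ⟨by linarith, ⟨fun h => by linarith, fun h => absurd h hne⟩⟩

end Matrix

/-- the Franklin estimate `γ̂ = (K + λH⁻¹)⁻¹y` also uniquely minimizes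
`g(γ) = (y − Kγ)'H(y − Kγ) + λγ'Kγ`. -/
theorem franklin_unique_minimizer_weighted {n : ℕ}
    (K H : Matrix (Fin n) (Fin n) ℝ) (hK : K.PosDef) (hH : H.PosDef)
    (y : Fin n → ℝ) (lam : ℝ) (hlam : 0 < lam)
    (g : (Fin n → ℝ) → ℝ)
    (hg : ∀ c : Fin n → ℝ,
      g c = (y - K *ᵥ c) ⬝ᵥ (H *ᵥ (y - K *ᵥ c)) + lam * (c ⬝ᵥ (K *ᵥ c)))
    (gammaHat : Fin n → ℝ)
    (hgamma : gammaHat = (K + lam • H⁻¹)⁻¹ *ᵥ y) :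
    ∀ c : Fin n → ℝ, g gammaHat ≤ g c ∧ (g gammaHat = g c ↔ c = gammaHat) := by
  have hA : (K + lam • H⁻¹).PosDef := hK.add (hH.inv.smul hlam)
  have hnormal : (K * H * K + lam • K) *ᵥ gammaHat = (K * H) *ᵥ y := by
    rw [hgamma]
    exact mul_mul_add_smul_mulVec_inv_mulVec ((isUnit_iff_isUnit_det H).mp hH.isUnit)
      ((isUnit_iff_isUnit_det _).mp hA.isUnit) y
  refine (hK.mul_mul_add_smul hH.posSemidef hlam).unique_min_of_eq_quadratic (a := y ⬝ᵥ (H *ᵥ y))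
    fun c => ?_
  rw [hg, hnormal]
  exact weighted_residual_add_penalty_eq hK.isHermitian hH.isHermitian y c lam
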